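/- arXiv:1905.01443 — 2 statements merged into one kernel-verified Lean document; each statement's English description precedes it below -/
import Mathlib

section
/- For real numbers β, S with S ≥ 3 and S < β ≤ S + 1, natural numbers n ≥ 1, I with 0 ≤ I ≤ n², and γ ≥ 1, the quantity ((β + 1 − S)·I + S·n²) / (2n² + γ(β − 1)) is at most (β + 1)/2, which is at most S/2 + 1. -/
/-!
Since `I ≤ n²` and `β + 1 - S > 0`, the equilibrium cost is at most `(β + 1)·n²`, while the
optimum is at least `2n²` because `γ(β - 1) ≥ 0`; hence the ratio is at most `(β + 1)/2`, and
`β ≤ S + 1` gives the last bound.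
-/

theorem mul_add_mul_le_add_mul {a b x N : ℝ} (ha : 0 ≤ a) (hx : x ≤ N) :
    a * x + b * N ≤ (a + b) * N := by
  nlinarith

theorem div_two_mul_add_le_half {a c N x : ℝ} (hc : 0 ≤ c) (hN : 0 ≤ N) (hx : 0 ≤ x)
    (h : a ≤ c * N) : a / (2 * N + x) ≤ c / 2 :=
  div_le_of_le_mul₀ (by positivity) (by positivity) (by nlinarith [mul_nonneg hc hx])

theorem typeII_poa_upper_general (β S γ : ℝ) (hS : 3 ≤ S) (hSβ : S < β) (hβS : β ≤ S + 1)
    (hγ : 1 ≤ γ) (n I : ℕ) (hI : I ≤ n ^ 2) :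
    ((β + 1 - S) * (I : ℝ) + S * (n : ℝ) ^ 2) / (2 * (n : ℝ) ^ 2 + γ * (β - 1)) ≤
        (β + 1) / 2 ∧
      (β + 1) / 2 ≤ S / 2 + 1 := by
  have hIn : (I : ℝ) ≤ (n : ℝ) ^ 2 := by exact_mod_cast hI
  have hequilibrium : (β + 1 - S) * (I : ℝ) + S * (n : ℝ) ^ 2 ≤ (β + 1) * (n : ℝ) ^ 2 := by
    simpa only [sub_add_cancel] using
      mul_add_mul_le_add_mul (b := S) (by linarith : 0 ≤ β + 1 - S) hIn
  have hγβ : 0 ≤ γ * (β - 1) := mul_nonneg (by linarith) (by linarith)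
  exact ⟨div_two_mul_add_le_half (by linarith) (by positivity) hγβ hequilibrium,
    by linarith⟩

/-- Type II PoA upper bound when `S < β ≤ S + 1`, `S ≥ 3`. -/
theorem typeII_poa_upper (β S γ : ℝ) (hS : 3 ≤ S) (hSβ : S < β) (hβS : β ≤ S + 1)
    (hγ : 1 ≤ γ) (n I : ℕ) (hn : 1 ≤ n) (hI : I ≤ n ^ 2) :
    ((β + 1 - S) * (I : ℝ) + S * (n : ℝ) ^ 2) / (2 * (n : ℝ) ^ 2 + γ * (β - 1)) ≤
        (β + 1) / 2 ∧
      (β + 1) / 2 ≤ S / 2 + 1 :=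
  typeII_poa_upper_general β S γ hS hSβ hβS hγ n I hI
end

section
/- Let G_1 be a graph on n vertices with minimum dominating set size γ. In the Type II game with 1 < β ≤ 2, the minimum possible social cost 2n² + (β−1)·|I| over all interconnection sets I whose neighborhoods in G_1 dominate G_1 is exactly 2n² + γ(β − 1), attained when the connected vertices form a minimum dominating set. -/
open SimpleGraph

/-- `D` is a dominating set of `G`. -/
def IsDomSet {V : Type*} (G : SimpleGraph V) (D : Finset V) : Prop :=
  ∀ w : V, w ∉ D → ∃ u ∈ D, G.Adj u w

/-- The domination number of `G`. -/
noncomputable def domNumber (V : Type*) [Fintype V] (G : SimpleGraph V) : ℕ :=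
  sInf {k : ℕ | ∃ D : Finset V, IsDomSet G D ∧ D.card = k}

lemma isDomSet_univ {V : Type*} [Fintype V] (G : SimpleGraph V) :
    IsDomSet G Finset.univ :=
  fun w hw => absurd (Finset.mem_univ w) hw

lemma isLeast_domNumber {V : Type*} [Fintype V] (G : SimpleGraph V) :
    IsLeast {k : ℕ | ∃ D : Finset V, IsDomSet G D ∧ D.card = k} (domNumber V G) :=
  isLeast_csInf ⟨_, Finset.univ, isDomSet_univ G, rfl⟩

theorem typeII_social_optimum_general {V : Type*} [Fintype V]
    (G : SimpleGraph V) (n : ℕ) (β : ℝ)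
    (hβ : 1 < β) :
    IsLeast {x : ℝ | ∃ D : Finset V, IsDomSet G D ∧
        x = 2 * (n : ℝ) ^ 2 + (β - 1) * D.card}
      (2 * (n : ℝ) ^ 2 + (domNumber V G : ℝ) * (β - 1)) := by
  have cost_mono : Monotone fun k : ℕ => 2 * (n : ℝ) ^ 2 + (β - 1) * k := fun _ _ hkl =>
    add_le_add_right (mul_le_mul_of_nonneg_left (Nat.cast_le.mpr hkl) (sub_nonneg.mpr hβ.le)) _
  have cost_image : {x : ℝ | ∃ D : Finset V, IsDomSet G D ∧
      x = 2 * (n : ℝ) ^ 2 + (β - 1) * D.card} =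
      (fun k : ℕ => 2 * (n : ℝ) ^ 2 + (β - 1) * k) ''
        {k : ℕ | ∃ D : Finset V, IsDomSet G D ∧ D.card = k} := by
    ext x
    constructor
    · rintro ⟨D, hD, rfl⟩
      exact ⟨D.card, ⟨D, hD, rfl⟩, rfl⟩
    · rintro ⟨_, ⟨D, hD, rfl⟩, rfl⟩
      exact ⟨D, hD, rfl⟩
  rw [cost_image, mul_comm (domNumber V G : ℝ)]
  exact cost_mono.map_isLeast (isLeast_domNumber G)

/-- Type II game with `1 < β ≤ 2`: the minimum of `2n² + (β − 1)|D|` over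
dominating sets `D` of `G₁` is exactly `2n² + γ(β − 1)`. -/
theorem typeII_social_optimum {V : Type*} [Fintype V] [DecidableEq V]
    (G : SimpleGraph V) (n : ℕ) (hn : Fintype.card V = n) (β : ℝ)
    (hβ : 1 < β) (hβ2 : β ≤ 2) :
    IsLeast {x : ℝ | ∃ D : Finset V, IsDomSet G D ∧
        x = 2 * (n : ℝ) ^ 2 + (β - 1) * D.card}
      (2 * (n : ℝ) ^ 2 + (domNumber V G : ℝ) * (β - 1)) :=
  typeII_social_optimum_general G n β hβ
end
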